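/- If a nondeterministic parity tree automaton over 𝕀-labelled 𝔸-branching trees (for finite alphabets 𝔸 and 𝕀) accepts at least one tree, then it accepts a regular tree. -/

import Mathlib

/-- The maximal color occurring infinitely often in the sequence `s` exists and is even. -/
def MaxInfEven (s : ℕ → ℕ) : Prop :=
  ∃ m, Even m ∧ {k | s k = m}.Infinite ∧ ∀ m', {k | s k = m'}.Infinite → m' ≤ m

/-- The nondeterministic parity tree automaton with states `Fin n`, initial state `s0`,
transition relation `ΔB` and coloring `col` accepts the `I`-labelled `A`-branching tree
`t`: there is a run `r` such that on every infinite branch the maximal color occurring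
infinitely often is even. -/
def NPTAAccepts {A I : Type} {n : ℕ} (s0 : Fin n) (ΔB : Set (Fin n × I × (A → Fin n)))
    (col : Fin n → ℕ) (t : List A → I) : Prop :=
  ∃ r : List A → Fin n, r [] = s0 ∧
    (∀ w, (r w, t w, fun a => r (w ++ [a])) ∈ ΔB) ∧
    ∀ b : ℕ → A, MaxInfEven (fun k => col (r (List.ofFn fun i : Fin k => b i.val)))

/-- A function on finite words is regular if it is computed by a deterministic finite
automaton with output (Moore machine): the output after reading `w` is `f w`. -/
def RegularFun {A I : Type} (f : List A → I) : Prop :=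
  ∃ (n : ℕ) (s0 : Fin n) (δ : Fin n → A → Fin n) (out : Fin n → I),
    ∀ w : List A, f w = out (w.foldl δ s0)

namespace S8


/-- truncated lexicographic strict order on priority-indexed ordinal tuples:
higher priority = more significant; only priorities ≥ c are compared. -/
def LexLt (c : ℕ) (v v' : ℕ → Ordinal) : Prop :=
  ∃ p, c ≤ p ∧ v p < v' p ∧ ∀ q, p < q → v q = v' q

def LexLe (c : ℕ) (v v' : ℕ → Ordinal) : Prop :=
  LexLt c v v' ∨ ∀ p, c ≤ p → v p = v' p

theorem lexLe_refl (c : ℕ) (v : ℕ → Ordinal) : LexLe c v v := Or.inr fun _ _ => rfl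

theorem lexLt_irrefl {c : ℕ} {v : ℕ → Ordinal} : ¬ LexLt c v v := by
  rintro ⟨p, -, hp, -⟩; exact lt_irrefl _ hp

theorem lexLt_trans {c : ℕ} {u v w : ℕ → Ordinal} (h1 : LexLt c u v) (h2 : LexLt c v w) :
    LexLt c u w := by
  obtain ⟨p, hcp, hp, hup⟩ := h1
  obtain ⟨q, hcq, hq, hvq⟩ := h2
  rcases lt_trichotomy p q with h | rfl | h
  · exact ⟨q, hcq, (hup q h) ▸ hq, fun s hs => (hup s (h.trans hs)).trans (hvq s hs)⟩
  · exact ⟨p, hcp, hp.trans hq, fun s hs => (hup s hs).trans (hvq s hs)⟩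
  · exact ⟨p, hcp, hp.trans_eq (hvq p h), fun s hs => (hup s hs).trans (hvq s (h.trans hs))⟩

theorem lexLt_of_lexLt_of_lexLe {c : ℕ} {u v w : ℕ → Ordinal} (h1 : LexLt c u v)
    (h2 : LexLe c v w) : LexLt c u w := by
  rcases h2 with h2 | h2
  · exact lexLt_trans h1 h2
  · obtain ⟨p, hcp, hp, hup⟩ := h1
    exact ⟨p, hcp, hp.trans_eq (h2 p hcp), fun s hs => (hup s hs).trans (h2 s (hcp.trans hs.le))⟩

theorem lexLt_of_lexLe_of_lexLt {c : ℕ} {u v w : ℕ → Ordinal} (h1 : LexLe c u v)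
    (h2 : LexLt c v w) : LexLt c u w := by
  rcases h1 with h1 | h1
  · exact lexLt_trans h1 h2
  · obtain ⟨p, hcp, hp, hup⟩ := h2
    exact ⟨p, hcp, (h1 p hcp) ▸ hp, fun s hs => (h1 s (hcp.trans hs.le)).trans (hup s hs)⟩

theorem lexLe_trans {c : ℕ} {u v w : ℕ → Ordinal} (h1 : LexLe c u v) (h2 : LexLe c v w) :
    LexLe c u w := by
  rcases h1 with h1 | h1
  · exact Or.inl (lexLt_of_lexLt_of_lexLe h1 h2)
  · rcases h2 with h2 | h2
    · exact Or.inl (lexLt_of_lexLe_of_lexLt (Or.inr h1) h2)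
    · exact Or.inr fun p hp => (h1 p hp).trans (h2 p hp)

/-- weakening: comparisons at lower cutoff imply comparisons at higher cutoff. -/
theorem lexLe_mono {c c' : ℕ} (hcc : c ≤ c') {v v' : ℕ → Ordinal} (h : LexLe c v v') :
    LexLe c' v v' := by
  rcases h with ⟨p, hcp, hp, hup⟩ | h
  · rcases le_or_gt c' p with hc'p | hpc'
    · exact Or.inl ⟨p, hc'p, hp, hup⟩
    · exact Or.inr fun q hq => hup q (hpc'.trans_le hq)
  · exact Or.inr fun p hp => h p (hcc.trans hp)

/-- componentwise comparison implies lexicographic comparison, given common bound. -/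
theorem lexLe_of_forall_le {c B : ℕ} {v v' : ℕ → Ordinal} (hB : ∀ p, B ≤ p → v p = v' p)
    (h : ∀ p, c ≤ p → v p ≤ v' p) : LexLe c v v' := by
  by_cases heq : ∀ p, c ≤ p → v p = v' p
  · exact Or.inr heq
  · push_neg at heq
    obtain ⟨p₀, hcp₀, hne₀⟩ := heq
    classical
    set P : ℕ → Prop := fun p => c ≤ p ∧ v p ≠ v' p with hP
    have hp₀ : P p₀ := ⟨hcp₀, hne₀⟩
    have hp₀B : p₀ ≤ B := by
      by_contra hb
      exact hne₀ (hB p₀ (le_of_not_ge (fun hle => hb (by omega))))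
    set p := Nat.findGreatest P B with hp
    have hPp : P p := Nat.findGreatest_spec (hp₀B) hp₀
    have habove : ∀ q, p < q → v q = v' q := by
      intro q hq
      rcases le_or_gt q B with hqB | hqB
      · by_contra hne
        rcases le_or_gt c q with hcq | hcq
        · exact Nat.lt_irrefl q (lt_of_le_of_lt (Nat.le_findGreatest hqB ⟨hcq, hne⟩) hq)
        · exact absurd hPp.1 (by omega)
      · exact hB q hqB.le
    exact Or.inl ⟨p, hPp.1, lt_of_le_of_ne (h p hPp.1) hPp.2, habove⟩


theorem lexLt_of_forall_le_of_lt {c B : ℕ} {v v' : ℕ → Ordinal} (hB : ∀ p, B ≤ p → v p = v' p)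
    (h : ∀ p, c ≤ p → v p ≤ v' p) (hs : v c < v' c) : LexLt c v v' := by
  rcases lexLe_of_forall_le hB h with h' | h'
  · exact h'
  · exact absurd (h' c le_rfl) hs.ne

/-- every nonempty set of ordinal tuples that agree above `B` has a lexicographic minimum. -/
theorem exists_lexMin (B : ℕ) : ∀ V : Set (ℕ → Ordinal), V.Nonempty →
    (∀ v ∈ V, ∀ v' ∈ V, ∀ p, B ≤ p → v p = v' p) →
    ∃ v₀ ∈ V, ∀ v ∈ V, LexLe 0 v₀ v := by
  induction B with
  | zero =>
    intro V hV hB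
    exact ⟨hV.choose, hV.choose_spec, fun v hv =>
      Or.inr fun p _ => hB _ hV.choose_spec _ hv p (Nat.zero_le p)⟩
  | succ B ih =>
    intro V hV hB
    have hO : ((fun v => v B) '' V).Nonempty := hV.image _
    set β := Ordinal.lt_wf.min _ hO with hβ
    have hβmem : β ∈ (fun v => v B) '' V := Ordinal.lt_wf.min_mem _ hO
    set V' : Set (ℕ → Ordinal) := {v ∈ V | v B = β} with hV'
    have hV'ne : V'.Nonempty := by
      obtain ⟨v, hv, hvB⟩ := hβmem
      exact ⟨v, hv, hvB⟩
    have hB' : ∀ v ∈ V', ∀ v' ∈ V', ∀ p, B ≤ p → v p = v' p := by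
      intro v hv v' hv' p hp
      rcases Nat.eq_or_lt_of_le hp with rfl | hp'
      · exact hv.2.trans hv'.2.symm
      · exact hB v hv.1 v' hv'.1 p hp'
    obtain ⟨v₀, hv₀, hmin⟩ := ih V' hV'ne hB'
    refine ⟨v₀, hv₀.1, fun v hv => ?_⟩
    by_cases hvB : v B = β
    · exact hmin v ⟨hv, hvB⟩
    · have hlt : β < v B :=
        lt_of_le_of_ne (not_lt.mp (Ordinal.lt_wf.not_lt_min ((fun v => v B) '' V) (x := v B) ⟨v, hv, rfl⟩)) (Ne.symm hvB)
      exact Or.inl ⟨B, Nat.zero_le B, hv₀.2 ▸ hlt, fun q hq => hB v₀ hv₀.1 v hv q hq⟩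


variable {A : Type} {n : ℕ} (r : List A → Fin n) (col : Fin n → ℕ)

/-- `PP b k` is the prefix of length `k` of the branch `b`. -/
def PP (b : ℕ → A) (k : ℕ) : List A := List.ofFn fun i : Fin k => b i.val

theorem PP_succ (b : ℕ → A) (k : ℕ) : PP b (k + 1) = PP b k ++ [b k] := by
  rw [PP, List.ofFn_succ']
  simp only [List.concat_eq_append, Fin.coe_castSucc, Fin.val_last]
  rfl

theorem PP_length (b : ℕ → A) (k : ℕ) : (PP b k).length = k := by simp [PP]

theorem PP_getElem (b : ℕ → A) (k m : ℕ) (hm : m < (PP b k).length) : (PP b k)[m] = b m := by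
  simp [PP]

theorem PP_prefix (b : ℕ → A) {k m : ℕ} (h : k ≤ m) : PP b k <+: PP b m := by
  induction m with
  | zero => simp [Nat.le_zero.mp h, PP]
  | succ m ih =>
    rcases Nat.eq_or_lt_of_le h with rfl | h'
    · exact List.prefix_refl _
    · exact (ih (by omega)).trans (PP_succ b m ▸ List.prefix_append _ _)

/-- `Btwn p v u`: `u` is a proper descendant of `v` of color `p` such that all nodes
strictly between have color at most `p`. -/
def Btwn (p : ℕ) (v u : List A) : Prop :=
  v <+: u ∧ v ≠ u ∧ col (r u) = p ∧
    ∀ w, v <+: w → w <+: u → w ≠ v → w ≠ u → col (r w) ≤ p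

theorem prefix_ne_length_lt {x y : List A} (h : x <+: y) (hne : x ≠ y) :
    x.length < y.length := by
  rcases Nat.eq_or_lt_of_le h.length_le with he | h'
  · exact absurd (h.eq_of_length he) hne
  · exact h'

theorem btwn_trans {p : ℕ} {a b c : List A} (hab : Btwn r col p b a) (hbc : Btwn r col p c b) :
    Btwn r col p c a := by
  obtain ⟨hba, hbane, hcola, hbtwa⟩ := hab
  obtain ⟨hcb, hcbne, hcolb, hbtwb⟩ := hbc
  have hca : c <+: a := hcb.trans hba
  have hlcb := prefix_ne_length_lt hcb hcbne
  have hlba := prefix_ne_length_lt hba hbane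
  refine ⟨hca, fun he => ?_, hcola, fun w hcw hwa hwc hwa' => ?_⟩
  · apply_fun List.length at he; omega
  · rcases le_or_gt w.length b.length with hwb | hbw
    · have hwb' : w <+: b := List.prefix_of_prefix_length_le hwa hba hwb
      by_cases hweq : w = b
      · rw [hweq, hcolb]
      · exact hbtwb w hcw hwb' hwc hweq
    · have hbw' : b <+: w := List.prefix_of_prefix_length_le hba hwa hbw.le
      refine hbtwa w hbw' hwa (fun he => ?_) hwa'
      rw [he] at hbw; omega

theorem btwn_wf (hacc : ∀ b : ℕ → A, MaxInfEven fun k => col (r (PP b k)))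
    {p : ℕ} (hp : Odd p) : WellFounded (fun u v => Btwn r col p v u) := by
  by_contra hwf
  haveI : IsStrictOrder (List A) (fun u v => Btwn r col p v u) :=
    { irrefl := fun a h => h.2.1 rfl
      trans := fun a b c hab hbc => btwn_trans r col hab hbc }
  obtain ⟨g⟩ := not_isEmpty_iff.mp (RelEmbedding.wellFounded_iff_isEmpty.not.mp hwf)
  set f : ℕ → List A := fun k => g k with hf
  have hstep : ∀ k, Btwn r col p (f k) (f (k + 1)) := fun k =>
    g.map_rel_iff'.mpr (Nat.lt_succ_self k)
  have hlen : ∀ k, (f k).length < (f (k + 1)).length := by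
    intro k
    rcases Nat.eq_or_lt_of_le (hstep k).1.length_le with he | h'
    · exact absurd ((hstep k).1.eq_of_length he) (hstep k).2.1
    · exact h'
  have hklen : ∀ k, k ≤ (f k).length := by
    intro k; induction k with
    | zero => exact Nat.zero_le _
    | succ k ih => exact Nat.lt_of_le_of_lt ih (hlen k)
  have hmono : ∀ j k, j ≤ k → f j <+: f k := by
    intro j k h
    induction k with
    | zero => exact Nat.le_zero.mp h ▸ List.prefix_refl _
    | succ k ih =>
      rcases Nat.eq_or_lt_of_le h with rfl | h'
      · exact List.prefix_refl _
      · exact (ih (by omega)).trans (hstep k).1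
  set b : ℕ → A := fun m => (f (m + 1))[m]'(Nat.lt_of_lt_of_le (Nat.lt_succ_self m)
    (hklen (m + 1))) with hb
  have hbm : ∀ k m (hm : m < (f k).length), (f k)[m] = b m := by
    intro k m hm
    have h1 : f k <+: f (max k (m + 1)) := hmono _ _ (le_max_left _ _)
    have h2 : f (m + 1) <+: f (max k (m + 1)) := hmono _ _ (le_max_right _ _)
    rw [h1.getElem hm, hb]
    exact (h2.getElem (Nat.lt_of_lt_of_le (Nat.lt_succ_self m) (hklen (m + 1)))).symm
  have hPf : ∀ k, PP b ((f k).length) = f k := by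
    intro k
    apply List.ext_getElem (by simp [PP_length])
    intro i h1 h2
    rw [PP_getElem, hbm k i h2]
  -- every position `kk ≥ (f 1).length` on branch `b` has color at most `p`
  have hle : ∀ kk, (f 1).length ≤ kk → col (r (PP b kk)) ≤ p := by
    intro kk hkk
    classical
    set k := Nat.findGreatest (fun j => (f j).length ≤ kk) kk with hk
    have hk1 : 1 ≤ k := Nat.le_findGreatest (le_trans (hklen 1) hkk) hkk
    have hkspec : (f k).length ≤ kk :=
      Nat.findGreatest_spec (P := fun j => (f j).length ≤ kk) (m := 1) (n := kk)
        (le_trans (hklen 1) hkk) hkk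
    have hknext : kk < (f (k + 1)).length := by
      by_contra hc
      push_neg at hc
      have : k + 1 ≤ k := Nat.le_findGreatest (le_trans (hklen (k + 1)) hc) hc
      omega
    rcases Nat.eq_or_lt_of_le hkspec with he | hlt
    · rw [← he, hPf k]
      have hk' : k - 1 + 1 = k := by omega
      have h := (hstep (k - 1)).2.2.1
      rw [hk'] at h
      exact h.le
    · have h1 : f k <+: PP b kk := by
        rw [← hPf k]; exact PP_prefix b hkspec
      have h2 : PP b kk <+: f (k + 1) := by
        rw [← hPf (k + 1)]; exact PP_prefix b (le_of_lt hknext)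
      refine (hstep k).2.2.2 (PP b kk) h1 h2 ?_ ?_
      · intro hc
        apply_fun List.length at hc
        rw [PP_length] at hc
        omega
      · intro hc
        apply_fun List.length at hc
        rw [PP_length] at hc
        omega
  -- positions `(f k).length`, `k ≥ 1`, have color exactly `p`, and are unbounded
  have hinfp : {kk | col (r (PP b kk)) = p}.Infinite := by
    apply Set.infinite_of_forall_exists_gt
    intro a
    refine ⟨(f (a + 1)).length, ?_, lt_of_lt_of_le (Nat.lt_succ_self a) (hklen (a + 1))⟩
    show col (r (PP b _)) = p
    rw [hPf (a + 1)]
    exact (hstep a).2.2.1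
  obtain ⟨m, hme, hminf, hmax⟩ := hacc b
  have hpm : p < m := by
    have h1 : p ≤ m := hmax p hinfp
    rcases Nat.eq_or_lt_of_le h1 with rfl | h
    · exact absurd hme (Nat.not_even_iff_odd.mpr hp)
    · exact h
  obtain ⟨kk, hkk, hkkgt⟩ := hminf.exists_gt ((f 1).length)
  have h1 := hle kk (le_of_lt hkkgt)
  have h2 : col (r (PP b kk)) = m := hkk
  omega

variable (hacc : ∀ b : ℕ → A, MaxInfEven fun k => col (r (PP b k)))

noncomputable def sig (w : List A) (p : ℕ) : Ordinal :=
  if hp : Odd p then ((btwn_wf r col hacc hp).apply w).rank else 0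

theorem sig_le {p : ℕ} {w w' : List A}
    (h : ∀ u, Btwn r col p w' u → Btwn r col p w u) :
    sig r col hacc w' p ≤ sig r col hacc w p := by
  unfold sig
  split_ifs with hp
  · rw [Acc.rank_eq, Acc.rank_eq]
    apply Ordinal.iSup_le_iff.mpr
    rintro ⟨u, hu⟩
    have he : ((((btwn_wf r col hacc hp).apply w').inv hu).rank)
        = ((((btwn_wf r col hacc hp).apply w).inv (h u hu)).rank) :=
      congrArg Acc.rank (Subsingleton.elim _ _)
    calc Order.succ (((btwn_wf r col hacc hp).apply w').inv hu).rank
        = Order.succ (((btwn_wf r col hacc hp).apply w).inv (h u hu)).rank := by rw [he]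
      _ ≤ _ := Ordinal.le_iSup
          (fun b : {b // Btwn r col p w b} =>
            Order.succ (((btwn_wf r col hacc hp).apply w).inv b.2).rank) ⟨u, h u hu⟩
  · exact le_refl 0

theorem sig_lt {p : ℕ} (hp : Odd p) {w u : List A} (h : Btwn r col p w u) :
    sig r col hacc u p < sig r col hacc w p := by
  unfold sig
  rw [dif_pos hp, dif_pos hp]
  have h1 := Acc.rank_lt_of_rel ((btwn_wf r col hacc hp).apply w) h
  have he : ((((btwn_wf r col hacc hp).apply w).inv h).rank)
      = (((btwn_wf r col hacc hp).apply u).rank) := congrArg Acc.rank (Subsingleton.elim _ _)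
  rw [he] at h1
  exact h1

theorem sig_eq_zero {B : ℕ} (hB : ∀ s, col s < B) {p : ℕ} (hp : B ≤ p) (w : List A) :
    sig r col hacc w p = 0 := by
  unfold sig
  split_ifs with hpo
  · rw [Acc.rank_eq]
    apply le_antisymm _ zero_le
    apply Ordinal.iSup_le_iff.mpr
    rintro ⟨u, hu⟩
    exact absurd hu.2.2.1 (by have := hB (r u); omega)
  · rfl

theorem sig_step (w : List A) (a : A) :
    (∀ p, col (r (w ++ [a])) ≤ p → sig r col hacc (w ++ [a]) p ≤ sig r col hacc w p) ∧
    (Odd (col (r (w ++ [a]))) →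
      sig r col hacc (w ++ [a]) (col (r (w ++ [a]))) < sig r col hacc w (col (r (w ++ [a])))) := by
  constructor
  · intro p hcp
    apply sig_le
    rintro u ⟨h1, h2, h3, h4⟩
    have hwu : w <+: u := (List.prefix_append w [a]).trans h1
    have hlu : (w ++ [a]).length < u.length := prefix_ne_length_lt h1 h2
    refine ⟨hwu, fun he => ?_, h3, fun y hy1 hy2 hy3 hy4 => ?_⟩
    · apply_fun List.length at he
      rw [List.length_append, List.length_singleton] at hlu
      omega
    · by_cases hya : y = w ++ [a]
      · rw [hya]; exact hcp
      · have hly : w.length < y.length := prefix_ne_length_lt hy1 (Ne.symm hy3)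
        have h5 : (w ++ [a]) <+: y := by
          apply List.prefix_of_prefix_length_le h1 hy2
          simp; omega
        exact h4 y h5 hy2 hya hy4
  · intro hodd
    apply sig_lt r col hacc hodd
    refine ⟨List.prefix_append w [a], fun he => ?_, rfl, fun y hy1 hy2 hy3 hy4 => ?_⟩
    · apply_fun List.length at he; simp at he
    · exfalso
      have l1 : w.length < y.length := prefix_ne_length_lt hy1 (Ne.symm hy3)
      have l2 : y.length < (w ++ [a]).length := prefix_ne_length_lt hy2 hy4
      simp at l2; omega

theorem exists_state_infinite {n : ℕ} (sk : ℕ → Fin n) {S : Set ℕ} (hS : S.Infinite) :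
    ∃ s, {k | k ∈ S ∧ sk k = s}.Infinite := by
  by_contra hall
  push_neg at hall
  apply hS
  exact Set.Finite.subset (Set.finite_iUnion fun s => hall s)
    (fun k hk => Set.mem_iUnion.mpr ⟨sk k, hk, rfl⟩)

end S8

/-- If a nondeterministic parity tree automaton over `I`-labelled `A`-branching trees
accepts some tree, then it accepts a regular tree. -/
theorem statement8 {A I : Type} [Finite A] [Finite I] {n : ℕ} (s0 : Fin n)
    (ΔB : Set (Fin n × I × (A → Fin n))) (col : Fin n → ℕ)
    (h : ∃ t, NPTAAccepts s0 ΔB col t) :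
    ∃ t, NPTAAccepts s0 ΔB col t ∧ RegularFun t := by
  classical
  obtain ⟨t, rr, hr0, hΔ, hracc⟩ := h
  have hacc : ∀ b : ℕ → A, MaxInfEven fun k => col (rr (S8.PP b k)) := hracc
  set B : ℕ := (Finset.univ.sup col) + 1 with hB
  have hcolB : ∀ s, col s < B := fun s =>
    Nat.lt_succ_of_le (Finset.le_sup (Finset.mem_univ s))
  set sg := S8.sig rr col hacc with hsg
  -- choose, for each state appearing in the run, a node of lexicographically minimal signature
  have hchoice : ∀ s : Fin n, ∃ wo : List A,
      (∃ w, rr w = s) → (rr wo = s ∧ ∀ w, rr w = s → S8.LexLe 0 (sg wo) (sg w)) := by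
    intro s
    by_cases hs : ∃ w, rr w = s
    · obtain ⟨v₀, hv₀, hmin⟩ := S8.exists_lexMin B (sg '' {w | rr w = s})
        (Set.Nonempty.image _ hs)
        (by
          rintro v ⟨w1, hw1, rfl⟩ v' ⟨w2, hw2, rfl⟩ p hp
          rw [hsg, S8.sig_eq_zero rr col hacc hcolB hp, S8.sig_eq_zero rr col hacc hcolB hp])
      obtain ⟨wo, hwo, rfl⟩ := hv₀
      exact ⟨wo, fun _ => ⟨hwo, fun w hw => hmin _ ⟨w, hw, rfl⟩⟩⟩
    · exact ⟨[], fun hc => absurd hc hs⟩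
  choose wt hwt using hchoice
  set δ : Fin n → A → Fin n := fun s a => if ∃ w, rr w = s then rr (wt s ++ [a]) else s with hδ
  set out : Fin n → I := fun s => if ∃ w, rr w = s then t (wt s) else t [] with hout
  set r' : List A → Fin n := fun w => w.foldl δ s0 with hr'
  have hfold : ∀ w a, r' (w ++ [a]) = δ (r' w) a := by
    intro w a
    simp only [hr', List.foldl_append, List.foldl_cons, List.foldl_nil]
  have hne : ∀ w, ∃ w', rr w' = r' w := by
    intro w
    induction w using List.reverseRecOn with
    | nil =>
      refine ⟨[], ?_⟩
      simp only [hr', List.foldl_nil]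
      exact hr0
    | append_singleton w a ih =>
      rw [hfold w a]
      simp only [hδ]
      rw [if_pos ih]
      exact ⟨wt (r' w) ++ [a], rfl⟩
  -- transition validity
  have htrans : ∀ w, (r' w, out (r' w), fun a => r' (w ++ [a])) ∈ ΔB := by
    intro w
    have hs := hne w
    obtain ⟨hwts, -⟩ := hwt (r' w) hs
    have hmem := hΔ (wt (r' w))
    rw [hwts] at hmem
    have he1 : out (r' w) = t (wt (r' w)) := by simp only [hout]; rw [if_pos hs]
    have he2 : (fun a => r' (w ++ [a])) = fun a => rr (wt (r' w) ++ [a]) := by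
      funext a
      rw [hfold w a]
      simp only [hδ]
      rw [if_pos hs]
    rw [he1, he2]
    exact hmem
  -- acceptance of the regular run
  have hacc' : ∀ b : ℕ → A, MaxInfEven fun k => col (r' (S8.PP b k)) := by
    intro b
    set sk : ℕ → Fin n := fun k => r' (S8.PP b k) with hsk
    have hskstep : ∀ k, sk (k + 1) = δ (sk k) (b k) := by
      intro k
      simp only [hsk]
      rw [S8.PP_succ, hfold]
    set μ : Fin n → (ℕ → Ordinal) := fun s => sg (wt s) with hμ
    have hedge : ∀ k, S8.LexLe (col (sk (k + 1))) (μ (sk (k + 1))) (μ (sk k)) ∧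
        (Odd (col (sk (k + 1))) → S8.LexLt (col (sk (k + 1))) (μ (sk (k + 1))) (μ (sk k))) := by
      intro k
      have hs := hne (S8.PP b k)
      obtain ⟨hwts, hmin⟩ := hwt (sk k) hs
      have hru : rr (wt (sk k) ++ [b k]) = sk (k + 1) := by
        rw [hskstep k]
        simp only [hδ]
        rw [if_pos hs]
      have hstep := S8.sig_step rr col hacc (wt (sk k)) (b k)
      rw [hru] at hstep
      have hcw : ∀ p, col (sk (k + 1)) ≤ p →
          sg (wt (sk k) ++ [b k]) p ≤ μ (sk k) p := fun p hp => hstep.1 p hp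
      have hBagree : ∀ p, B ≤ p → sg (wt (sk k) ++ [b k]) p = μ (sk k) p := by
        intro p hp
        simp only [hμ, hsg]
        rw [S8.sig_eq_zero rr col hacc hcolB hp, S8.sig_eq_zero rr col hacc hcolB hp]
      obtain ⟨hwts', hmin'⟩ := hwt (sk (k + 1)) ⟨wt (sk k) ++ [b k], hru⟩
      have h1 : S8.LexLe 0 (μ (sk (k + 1))) (sg (wt (sk k) ++ [b k])) := hmin' _ hru
      have h1' : S8.LexLe (col (sk (k + 1))) (μ (sk (k + 1))) (sg (wt (sk k) ++ [b k])) :=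
        S8.lexLe_mono (Nat.zero_le _) h1
      constructor
      · exact S8.lexLe_trans h1' (S8.lexLe_of_forall_le hBagree hcw)
      · intro hodd
        exact S8.lexLt_of_lexLe_of_lexLt h1'
          (S8.lexLt_of_forall_le_of_lt hBagree hcw (hstep.2 hodd))
    -- the maximal color occurring infinitely often
    obtain ⟨s₁, hs₁⟩ := Finite.exists_infinite_fiber sk
    have hc₀ : {k | col (sk k) = col s₁}.Infinite := by
      refine Set.Infinite.mono ?_ (Set.infinite_coe_iff.mp hs₁)
      intro k hk
      have : sk k = s₁ := hk
      simp [this]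
    set C : Set ℕ := {c | {k | col (sk k) = c}.Infinite} with hC
    set cs : ℕ := Nat.findGreatest (· ∈ C) B with hcs
    have hcsC : cs ∈ C :=
      Nat.findGreatest_spec (P := (· ∈ C)) (m := col s₁) (n := B) (hcolB s₁).le hc₀
    have hcsmax : ∀ c ∈ C, c ≤ cs := by
      intro c hc
      rcases le_or_gt c B with hcB | hcB
      · exact Nat.le_findGreatest hcB hc
      · exfalso
        obtain ⟨k, hk⟩ := hc.nonempty
        have h1 : col (sk k) = c := hk
        have := hcolB (sk k)
        omega
    have hEven : Even cs := by
      by_contra hodd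
      replace hodd : Odd cs := Nat.not_even_iff_odd.mp hodd
      have hT : {k | cs < col (sk k)}.Finite := by
        by_contra hTinf
        obtain ⟨s', hs'⟩ := S8.exists_state_infinite sk hTinf
        obtain ⟨k, hk⟩ := hs'.nonempty
        have hgt : cs < col s' := hk.2 ▸ hk.1
        have hmem : col s' ∈ C := by
          refine Set.Infinite.mono ?_ hs'
          intro j hj
          show col (sk j) = col s'
          rw [hj.2]
        have := hcsmax _ hmem
        omega
      obtain ⟨K, hK⟩ := hT.bddAbove
      have hbound : ∀ k, K < k → col (sk k) ≤ cs := by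
        intro k hk
        by_contra hlt
        push_neg at hlt
        have := hK (show k ∈ {k | cs < col (sk k)} from hlt)
        omega
      have hS2 : {k | K < k ∧ col (sk k) = cs}.Infinite := by
        refine Set.Infinite.mono ?_ ((Set.Infinite.diff hcsC (Set.finite_Iic K)))
        rintro k ⟨h1, h2⟩
        exact ⟨by simpa using h2, h1⟩
      obtain ⟨s₂, hs₂⟩ := S8.exists_state_infinite sk hS2
      obtain ⟨k₁, hk₁⟩ := hs₂.nonempty
      obtain ⟨k₂, hk₂, hk₁₂⟩ := hs₂.exists_gt k₁
      have hchain : ∀ j, k₁ ≤ j → j ≤ k₂ → S8.LexLe cs (μ (sk j)) (μ (sk k₁)) := by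
        intro j
        induction j with
        | zero =>
          intro h1 _
          have he : k₁ = 0 := by omega
          rw [he]
          exact S8.lexLe_refl _ _
        | succ j ih =>
          intro h1 h2
          rcases Nat.eq_or_lt_of_le h1 with he | hlt
          · rw [← he]
            exact S8.lexLe_refl _ _
          · have hj : k₁ ≤ j := by omega
            have hKj : K < j + 1 := by
              have := hk₁.1.1
              omega
            exact S8.lexLe_trans (S8.lexLe_mono (hbound (j + 1) hKj) (hedge j).1)
              (ih hj (by omega))
      have hstrict : S8.LexLt cs (μ (sk k₂)) (μ (sk k₁)) := by
        have h2 : k₂ - 1 + 1 = k₂ := by omega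
        have hcol : col (sk k₂) = cs := hk₂.1.2
        have he := (hedge (k₂ - 1)).2
        rw [h2, hcol] at he
        exact S8.lexLt_of_lexLt_of_lexLe (he hodd)
          (hchain (k₂ - 1) (by omega) (by omega))
      rw [hk₁.2, hk₂.2] at hstrict
      exact S8.lexLt_irrefl hstrict
    exact ⟨cs, hEven, hcsC, fun m' hm' => hcsmax m' hm'⟩
  exact ⟨fun w => out (r' w), ⟨r', rfl, htrans, fun b => hacc' b⟩,
    n, s0, δ, out, fun w => rfl⟩
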